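/- arXiv:1601.04787 — 3 statements merged into one kernel-verified Lean document; each statement's English description precedes it below -/
import Mathlib

section
/- Let ε ∈ [0,1] and τ ∈ [0, ε³]. Define the bipodal graphon q on [0,1]² by q(x,y) = ε - (ε³ - τ)^{1/3} if x,y are both in [0,1/2] or both in (1/2,1], and q(x,y) = ε + (ε³ - τ)^{1/3} otherwise, assuming ε ≥ (ε³-τ)^{1/3} and ε + (ε³-τ)^{1/3} ≤ 1 so that q takes values in [0,1]. Then q has edge density ∫∫ q = ε and triangle density ∫∫∫ q(x,y)q(y,z)q(z,x) dx dy dz = τ. -/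
open MeasureTheory

/-- Edge density of a graphon. -/
noncomputable def edgeDensity (q : ℝ → ℝ → ℝ) : ℝ :=
  ∫ x in (0:ℝ)..1, ∫ y in (0:ℝ)..1, q x y

/-- Triangle density of a graphon. -/
noncomputable def triangleDensity (q : ℝ → ℝ → ℝ) : ℝ :=
  ∫ x in (0:ℝ)..1, ∫ y in (0:ℝ)..1, ∫ z in (0:ℝ)..1, q x y * q y z * q z x

/-!
Write the bipodal graphon as `q x y = ε - c * s x * s y`, where `s = ±1` on the two halves of
`[0, 1]`. Since `s * s = 1` and `∫ s = 0`, integrating one variable at a time kills every term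
that is linear in some `s`: the edge density is `ε`, and in the triangle density only
`ε ^ 3 - c ^ 3 * (s x * s y * s z) ^ 2 = ε ^ 3 - c ^ 3` survives.
-/

lemma integral_ite_le_half (A B : ℝ) :
    ∫ y in (0:ℝ)..1, (if y ≤ 1/2 then A else B) = (A + B) / 2 := by
  have as_indicator : (fun y : ℝ => if y ≤ 1/2 then A else B)
      = fun y => Set.indicator {x : ℝ | x ≤ 1/2} (fun _ => A - B) y + B := by
    funext y
    simp only [Set.indicator_apply, Set.mem_ofPred_eq]
    split_ifs <;> ring
  have hi : IntervalIntegrable (Set.indicator {x : ℝ | x ≤ 1/2} fun _ => A - B) volume 0 1 :=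
    intervalIntegrable_iff.2 <|
      (integrableOn_const measure_Ioc_lt_top.ne).indicator measurableSet_Iic
  rw [as_indicator, intervalIntegral.integral_add hi intervalIntegrable_const,
    intervalIntegral.integral_indicator (by norm_num : (1/2:ℝ) ∈ Set.Icc (0:ℝ) 1)]
  simp only [intervalIntegral.integral_const, smul_eq_mul]
  ring

noncomputable def halfSign (x : ℝ) : ℝ := if x ≤ 1/2 then 1 else -1

lemma halfSign_mul_self (x : ℝ) : halfSign x * halfSign x = 1 := by
  unfold halfSign
  split_ifs <;> norm_num

lemma integral_add_mul_halfSign (a b : ℝ) :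
    ∫ x in (0:ℝ)..1, a + b * halfSign x = a := by
  have as_ite : (fun x => a + b * halfSign x) = fun x => if x ≤ 1/2 then a + b else a - b := by
    funext x
    unfold halfSign
    split_ifs <;> ring
  rw [as_ite, integral_ite_le_half]
  ring

noncomputable def bipodalGraphon (ε c : ℝ) (x y : ℝ) : ℝ := ε - c * (halfSign x * halfSign y)

lemma bipodalGraphon_eq_ite (ε c x y : ℝ) : bipodalGraphon ε c x y =
    if (x ≤ 1/2 ∧ y ≤ 1/2) ∨ (1/2 < x ∧ 1/2 < y) then ε - c else ε + c := by
  unfold bipodalGraphon halfSign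
  split_ifs <;> first | (exfalso; grind) | ring

theorem edgeDensity_bipodalGraphon (ε c : ℝ) : edgeDensity (bipodalGraphon ε c) = ε := by
  have row : ∀ x, ∫ y in (0:ℝ)..1, bipodalGraphon ε c x y = ε := fun x => by
    simpa only [bipodalGraphon, neg_mul, mul_assoc, ← sub_eq_add_neg]
      using integral_add_mul_halfSign ε (-c * halfSign x)
  simp [edgeDensity, row]

theorem triangleDensity_bipodalGraphon (ε c : ℝ) :
    triangleDensity (bipodalGraphon ε c) = ε ^ 3 - c ^ 3 := by
  set s := halfSign
  have inner : ∀ x y, ∫ z in (0:ℝ)..1,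
      bipodalGraphon ε c x y * bipodalGraphon ε c y z * bipodalGraphon ε c z x
        = (ε - c * (s x * s y)) * (ε ^ 2 + c ^ 2 * (s x * s y)) := fun x y => by
    rw [← integral_add_mul_halfSign ((ε - c * (s x * s y)) * (ε ^ 2 + c ^ 2 * (s x * s y)))
      (-(ε - c * (s x * s y)) * ε * c * (s x + s y))]
    refine intervalIntegral.integral_congr fun z _ => ?_
    simp only [bipodalGraphon]
    linear_combination (ε - c * (s x * s y)) * c ^ 2 * (s x * s y) * halfSign_mul_self z
  have middle : ∀ x, ∫ y in (0:ℝ)..1, (ε - c * (s x * s y)) * (ε ^ 2 + c ^ 2 * (s x * s y))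
      = ε ^ 3 - c ^ 3 := fun x => by
    rw [← integral_add_mul_halfSign (ε ^ 3 - c ^ 3) ((ε * c ^ 2 - ε ^ 2 * c) * s x)]
    refine intervalIntegral.integral_congr fun y _ => ?_
    linear_combination (-c ^ 3) * (s y * s y * halfSign_mul_self x + halfSign_mul_self y)
  simp [triangleDensity, inner, middle]

theorem bipodal_graphon_realizes_edge_triangle_general
    (ε τ : ℝ) (hτ : τ ≤ ε ^ 3)
    (c : ℝ) (hc : c = (ε ^ 3 - τ) ^ ((1:ℝ)/3))
    (q : ℝ → ℝ → ℝ)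
    (hq : ∀ x y, q x y =
      if (x ≤ 1/2 ∧ y ≤ 1/2) ∨ (1/2 < x ∧ 1/2 < y) then ε - c else ε + c) :
    edgeDensity q = ε ∧ triangleDensity q = τ := by
  obtain rfl : q = bipodalGraphon ε c :=
    funext₂ fun x y => (hq x y).trans (bipodalGraphon_eq_ite ε c x y).symm
  have hc3 : c ^ 3 = ε ^ 3 - τ := by
    rw [hc, one_div]
    exact_mod_cast Real.rpow_inv_natCast_pow (n := 3) (sub_nonneg.2 hτ) three_ne_zero
  refine ⟨edgeDensity_bipodalGraphon ε c, ?_⟩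
  rw [triangleDensity_bipodalGraphon, hc3]
  ring

/-- The bipodal graphon taking value `ε - (ε³-τ)^{1/3}` on the two diagonal blocks and
`ε + (ε³-τ)^{1/3}` on the off-diagonal blocks has edge density `ε` and triangle
density `τ`, for `τ ∈ [0, ε³]` (assuming the values lie in `[0,1]`). -/
theorem bipodal_graphon_realizes_edge_triangle
    (ε τ : ℝ) (hε : ε ∈ Set.Icc (0:ℝ) 1) (hτ0 : 0 ≤ τ) (hτ : τ ≤ ε ^ 3)
    (c : ℝ) (hc : c = (ε ^ 3 - τ) ^ ((1:ℝ)/3))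
    (hc1 : c ≤ ε) (hc2 : ε + c ≤ 1)
    (q : ℝ → ℝ → ℝ)
    (hq : ∀ x y, q x y =
      if (x ≤ 1/2 ∧ y ≤ 1/2) ∨ (1/2 < x ∧ 1/2 < y) then ε - c else ε + c) :
    edgeDensity q = ε ∧ triangleDensity q = τ :=
  bipodal_graphon_realizes_edge_triangle_general ε τ hτ c hc q hq
end

section
/- For every finite simple graph H with k vertices, the map q ↦ t_H(q) is Lipschitz on the space of graphons with respect to the cut norm: |t_H(f) - t_H(g)| ≤ |E(H)| · d_□(f,g), where d_□(f,g) = sup_{S,T ⊆ [0,1]} |∫_{S×T} (f - g)|. -/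
/-!
Telescoping over the edges turns `t_H(f) - t_H(g)` into a sum of `|E(H)|` integrals, each with
`f - g` on one edge `uv`, `f` on some of the other edges and `g` on the rest. Integrating out
`x_u` and `x_v` first, the other factors split into one free of `x_v` and one free of `x_u`
(no other edge joins `u` and `v`), so each term is an average of bilinear forms
`∫∫ φ(x) ψ(y) (f - g)(x, y)` with `[0, 1]`-valued `φ`, `ψ`. Such a form is extremal when `φ` and
`ψ` are indicators of sets, where it is bounded by the cut distance.
-/

open MeasureTheory

/-- Homomorphism density `t_H(q)` of `H` in a kernel `q`. -/
noncomputable def homDensity {k : ℕ} (H : SimpleGraph (Fin k)) [DecidableRel H.Adj]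
    (q : ℝ → ℝ → ℝ) : ℝ :=
  ∫ x : Fin k → ℝ in Set.univ.pi (fun _ => Set.Icc (0:ℝ) 1),
    ∏ e ∈ H.edgeFinset, q (x e.inf) (x e.sup)

open Set Function

section CutNorm

variable {α β : Type*} [MeasurableSpace α] [MeasurableSpace β] {μ : Measure α} {ν : Measure β}

theorem integral_mul_le_setIntegral_pos {h φ : α → ℝ} (hh : Integrable h μ) (hhm : Measurable h)
    (hφ : AEStronglyMeasurable φ μ) (hφ01 : ∀ x, φ x ∈ Icc (0 : ℝ) 1) :
    ∫ x, φ x * h x ∂μ ≤ ∫ x in {x | 0 < h x}, h x ∂μ := by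
  have hpos : MeasurableSet {x | 0 < h x} := measurableSet_lt measurable_const hhm
  rw [← integral_indicator hpos]
  refine integral_mono (hh.bdd_mul hφ (c := 1) (ae_of_all _ fun x => ?_)) (hh.indicator hpos)
    fun x => ?_
  · rw [Real.norm_of_nonneg (hφ01 x).1]; exact (hφ01 x).2
  by_cases hx : 0 < h x
  · rw [indicator_of_mem (show x ∈ {x | 0 < h x} from hx)]
    exact mul_le_of_le_one_left hx.le (hφ01 x).2
  · rw [indicator_of_notMem (show x ∉ {x | 0 < h x} from hx)]
    exact mul_nonpos_of_nonneg_of_nonpos (hφ01 x).1 (not_lt.1 hx)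

theorem abs_integral_mul_le_of_abs_setIntegral_le {h φ : α → ℝ} {δ : ℝ} (hh : Integrable h μ)
    (hhm : Measurable h) (hφ : AEStronglyMeasurable φ μ) (hφ01 : ∀ x, φ x ∈ Icc (0 : ℝ) 1)
    (hδ : ∀ S, MeasurableSet S → |∫ x in S, h x ∂μ| ≤ δ) :
    |∫ x, φ x * h x ∂μ| ≤ δ := by
  have hup := integral_mul_le_setIntegral_pos hh hhm hφ hφ01
  have hlow := integral_mul_le_setIntegral_pos hh.neg hhm.neg hφ hφ01
  simp only [Pi.neg_apply, mul_neg, integral_neg, neg_pos] at hlow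
  have hδpos := hδ {x | 0 < h x} (measurableSet_lt measurable_const hhm)
  have hδneg := hδ {x | h x < 0} (measurableSet_lt hhm measurable_const)
  rw [abs_le] at hδpos hδneg ⊢
  constructor <;> linarith [hδpos.2, hδneg.1]

variable [SFinite μ] [SFinite ν]

theorem MeasureTheory.Integrable.restrict_prod_restrict {F : α × β → ℝ}
    (hF : Integrable F (μ.prod ν)) (S : Set α) (T : Set β) :
    Integrable F ((μ.restrict S).prod (ν.restrict T)) := by
  rw [Measure.prod_restrict]
  exact hF.restrict

theorem abs_setIntegral_integral_mul_le_of_cut {F : α → β → ℝ} {δ : ℝ}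
    (hFm : Measurable (uncurry F)) (hFi : Integrable (uncurry F) (μ.prod ν))
    (hcut : ∀ S T, MeasurableSet S → MeasurableSet T →
      |∫ x in S, ∫ y in T, F x y ∂ν ∂μ| ≤ δ)
    {ψ : β → ℝ} (hψ : Measurable ψ) (hψ01 : ∀ y, ψ y ∈ Icc (0 : ℝ) 1)
    {S : Set α} (hS : MeasurableSet S) :
    |∫ x in S, ∫ y, ψ y * F x y ∂ν ∂μ| ≤ δ := by
  have hFS : Integrable (uncurry F) ((μ.restrict S).prod ν) := by
    simpa using hFi.restrict_prod_restrict S univ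
  have hψF : Integrable (uncurry fun x y => ψ y * F x y) ((μ.restrict S).prod ν) :=
    hFS.bdd_mul (c := 1) (hψ.comp measurable_snd).aestronglyMeasurable (ae_of_all _ fun p => by
      rw [Real.norm_of_nonneg (hψ01 p.2).1]; exact (hψ01 p.2).2)
  rw [integral_integral_swap hψF]
  simp only [integral_const_mul]
  refine abs_integral_mul_le_of_abs_setIntegral_le hFS.integral_prod_right
    (hFm.stronglyMeasurable.integral_prod_left (μ := μ.restrict S)).measurable
    hψ.aestronglyMeasurable hψ01 fun T hT => ?_
  rw [← integral_integral_swap (hFi.restrict_prod_restrict S T)]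
  exact hcut S T hS hT

theorem abs_integral_mul_integral_mul_le_of_cut {F : α → β → ℝ} {δ : ℝ}
    (hFm : Measurable (uncurry F)) (hFi : Integrable (uncurry F) (μ.prod ν))
    (hcut : ∀ S T, MeasurableSet S → MeasurableSet T →
      |∫ x in S, ∫ y in T, F x y ∂ν ∂μ| ≤ δ)
    {φ : α → ℝ} {ψ : β → ℝ} (hφ : Measurable φ) (hψ : Measurable ψ)
    (hφ01 : ∀ x, φ x ∈ Icc (0 : ℝ) 1) (hψ01 : ∀ y, ψ y ∈ Icc (0 : ℝ) 1) :
    |∫ x, φ x * ∫ y, ψ y * F x y ∂ν ∂μ| ≤ δ := by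
  have hψF : Integrable (uncurry fun x y => ψ y * F x y) (μ.prod ν) :=
    hFi.bdd_mul (c := 1) (hψ.comp measurable_snd).aestronglyMeasurable (ae_of_all _ fun p => by
      rw [Real.norm_of_nonneg (hψ01 p.2).1]; exact (hψ01 p.2).2)
  exact abs_integral_mul_le_of_abs_setIntegral_le hψF.integral_prod_left
    ((hψ.comp measurable_snd).mul hFm).stronglyMeasurable.integral_prod_right.measurable
    hφ.aestronglyMeasurable hφ01
    fun S hS => abs_setIntegral_integral_mul_le_of_cut hFm hFi hcut hψ hψ01 hS

end CutNorm

section Update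

variable {ι : Type*} [Fintype ι] [DecidableEq ι] {α : ι → Type*} [∀ i, MeasurableSpace (α i)]
  (μ : ∀ i, Measure (α i)) [∀ i, IsProbabilityMeasure (μ i)]

theorem measurePreserving_update (i : ι) :
    MeasurePreserving (fun p : α i × (∀ j, α j) => update p.2 i p.1)
      ((μ i).prod (Measure.pi μ)) (Measure.pi μ) := by
  have hm : Measurable fun p : α i × (∀ j, α j) => update p.2 i p.1 := by fun_prop
  refine ⟨hm, (Measure.pi_eq fun s hs => ?_).symm⟩
  have hpre : (fun p : α i × (∀ j, α j) => update p.2 i p.1) ⁻¹' univ.pi s =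
      s i ×ˢ univ.pi (update s i univ) := by
    ext p
    simp only [mem_preimage, mem_pi, mem_univ, forall_const, mem_prod]
    refine ⟨fun h => ⟨by simpa using h i, fun j => ?_⟩, fun ⟨hi, h⟩ j => ?_⟩
    · rcases eq_or_ne j i with rfl | hj
      · simp
      · simpa [update_of_ne hj] using h j
    · rcases eq_or_ne j i with rfl | hj
      · simpa using hi
      · simpa [update_of_ne hj] using h j
  rw [Measure.map_apply hm (.univ_pi hs), hpre, Measure.prod_prod, Measure.pi_pi,
    ← Finset.mul_prod_erase _ _ (Finset.mem_univ i),
    ← Finset.mul_prod_erase _ _ (Finset.mem_univ i)]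
  simp only [update_self, measure_univ, one_mul]
  exact congrArg _ <| Finset.prod_congr rfl fun j hj => by
    rw [update_of_ne (Finset.ne_of_mem_erase hj)]

variable {μ} {E : Type*} [NormedAddCommGroup E] [NormedSpace ℝ E]

theorem integral_eq_integral_integral_update (i : ι) {h : (∀ j, α j) → E}
    (hh : Integrable h (Measure.pi μ)) :
    ∫ x, h x ∂Measure.pi μ = ∫ x, ∫ a, h (update x i a) ∂μ i ∂Measure.pi μ := by
  have hmp := measurePreserving_update μ i
  have hhu : Integrable (fun p : α i × (∀ j, α j) => h (update p.2 i p.1))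
      ((μ i).prod (Measure.pi μ)) := (hmp.integrable_comp hh.aestronglyMeasurable).2 hh
  calc ∫ x, h x ∂Measure.pi μ
      = ∫ p, h (update p.2 i p.1) ∂(μ i).prod (Measure.pi μ) := by
        conv_lhs => rw [← hmp.map_eq]
        exact integral_map hmp.measurable.aemeasurable
          (by rw [hmp.map_eq]; exact hh.aestronglyMeasurable)
    _ = ∫ x, ∫ a, h (update x i a) ∂μ i ∂Measure.pi μ := by
        rw [integral_prod _ hhu, integral_integral_swap hhu]

theorem MeasureTheory.Integrable.integral_update (i : ι) {h : (∀ j, α j) → E}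
    (hh : Integrable h (Measure.pi μ)) :
    Integrable (fun x => ∫ a, h (update x i a) ∂μ i) (Measure.pi μ) :=
  ((measurePreserving_update μ i).integrable_comp hh.aestronglyMeasurable).2 hh
    |>.integral_prod_right

theorem abs_integral_mul_mul_le_of_cut {u v : ι} (huv : u ≠ v) {F : α u → α v → ℝ} {C δ : ℝ}
    (hFm : Measurable (uncurry F)) (hFb : ∀ a b, |F a b| ≤ C)
    (hcut : ∀ S T, MeasurableSet S → MeasurableSet T →
      |∫ a in S, ∫ b in T, F a b ∂μ v ∂μ u| ≤ δ)
    {Φ Ψ : (∀ i, α i) → ℝ} (hΦm : Measurable Φ) (hΨm : Measurable Ψ)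
    (hΦ01 : ∀ x, Φ x ∈ Icc (0 : ℝ) 1) (hΨ01 : ∀ x, Ψ x ∈ Icc (0 : ℝ) 1)
    (hΦv : ∀ x b, Φ (update x v b) = Φ x) (hΨu : ∀ x a, Ψ (update x u a) = Ψ x) :
    |∫ x, F (x u) (x v) * (Φ x * Ψ x) ∂Measure.pi μ| ≤ δ := by
  have hint : Integrable (fun x => F (x u) (x v) * (Φ x * Ψ x)) (Measure.pi μ) := by
    refine .of_bound (by fun_prop) C (ae_of_all _ fun x => ?_)
    have hΦΨ : |Φ x * Ψ x| ≤ 1 := by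
      rw [abs_of_nonneg (mul_nonneg (hΦ01 x).1 (hΨ01 x).1)]
      exact mul_le_one₀ (hΦ01 x).2 (hΨ01 x).1 (hΨ01 x).2
    rw [Real.norm_eq_abs, abs_mul]
    exact (mul_le_of_le_one_right (abs_nonneg _) hΦΨ).trans (hFb _ _)
  have hslice : ∀ x : ∀ i, α i, ∀ a b,
      F (update (update x u a) v b u) (update (update x u a) v b v) *
        (Φ (update (update x u a) v b) * Ψ (update (update x u a) v b)) =
      Φ (update x u a) * (Ψ (update x v b) * F a b) := by
    intro x a b
    rw [update_of_ne huv, update_self, update_self, hΦv, update_comm huv, hΨu]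
    ring
  rw [integral_eq_integral_integral_update v hint,
    integral_eq_integral_integral_update u (hint.integral_update v)]
  simp only [hslice, integral_const_mul]
  have hFi : Integrable (uncurry F) ((μ u).prod (μ v)) :=
    .of_bound hFm.aestronglyMeasurable C (ae_of_all _ fun p => hFb p.1 p.2)
  have hbil : ∀ x : ∀ i, α i,
      ‖∫ a, Φ (update x u a) * ∫ b, Ψ (update x v b) * F a b ∂μ v ∂μ u‖ ≤ δ := fun x =>
    abs_integral_mul_integral_mul_le_of_cut hFm hFi hcut (hΦm.comp (measurable_update x))
      (hΨm.comp (measurable_update x)) (fun a => hΦ01 _) (fun b => hΨ01 _)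
  simpa using norm_integral_le_of_norm_le_const (ae_of_all (Measure.pi μ) hbil)

end Update

namespace Sym2

variable {α : Type*} [LinearOrder α]

theorem mk_inf_sup (e : Sym2 α) : s(e.inf, e.sup) = e :=
  sortEquiv.symm_apply_apply e

theorem inf_mem (e : Sym2 α) : e.inf ∈ e := by
  simpa only [mk_inf_sup] using mem_mk_left e.inf e.sup

theorem sup_mem (e : Sym2 α) : e.sup ∈ e := by
  simpa only [mk_inf_sup] using mem_mk_right e.inf e.sup

theorem inf_ne_sup {e : Sym2 α} (he : ¬e.IsDiag) : e.inf ≠ e.sup := fun h =>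
  he (e.mk_inf_sup ▸ mk_isDiag_iff.2 h)

end Sym2

section EdgeProd

variable {ι α : Type*} [LinearOrder ι]

/-- `∏_{e ∈ A} w_e(x_{min e}, x_{max e})`, with a kernel `w_e` for each edge so that kernels can be
exchanged one edge at a time. -/
def edgeProd (A : Finset (Sym2 ι)) (w : Sym2 ι → α → α → ℝ) (x : ι → α) : ℝ :=
  ∏ e ∈ A, w e (x e.inf) (x e.sup)

variable {A : Finset (Sym2 ι)} {w : Sym2 ι → α → α → ℝ}

theorem edgeProd_update {i : ι} (hA : ∀ e ∈ A, i ∉ e) (x : ι → α) (a : α) :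
    edgeProd A w (update x i a) = edgeProd A w x :=
  Finset.prod_congr rfl fun e he => by
    rw [update_of_ne (ne_of_mem_of_not_mem e.inf_mem (hA e he)),
      update_of_ne (ne_of_mem_of_not_mem e.sup_mem (hA e he))]

theorem edgeProd_congr {w' : Sym2 ι → α → α → ℝ} (h : ∀ e ∈ A, w e = w' e) :
    edgeProd A w = edgeProd A w' :=
  funext fun _ => Finset.prod_congr rfl fun e he => by rw [h e he]

theorem measurable_edgeProd [MeasurableSpace α] (hw : ∀ e, Measurable (uncurry (w e))) :
    Measurable (edgeProd A w) :=
  Finset.measurable_prod _ fun e _ =>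
    (hw e).comp (f := fun x : ι → α => (x e.inf, x e.sup)) (by fun_prop)

theorem edgeProd_mem_Icc (hw : ∀ e a b, w e a b ∈ Icc (0 : ℝ) 1) (x : ι → α) :
    edgeProd A w x ∈ Icc (0 : ℝ) 1 :=
  ⟨Finset.prod_nonneg fun e _ => (hw e _ _).1,
    Finset.prod_le_one (fun e _ => (hw e _ _).1) fun e _ => (hw e _ _).2⟩

end EdgeProd

section Counting

variable {ι α : Type*} [Fintype ι] [LinearOrder ι] [MeasurableSpace α] {μ : Measure α}
  [IsProbabilityMeasure μ]

theorem abs_integral_mul_edgeProd_le_of_cut {e : Sym2 ι} (he : ¬e.IsDiag) {A : Finset (Sym2 ι)}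
    (heA : e ∉ A) {w : Sym2 ι → α → α → ℝ} (hwm : ∀ e, Measurable (uncurry (w e)))
    (hw01 : ∀ e a b, w e a b ∈ Icc (0 : ℝ) 1) {F : α → α → ℝ} {C δ : ℝ}
    (hFm : Measurable (uncurry F)) (hFb : ∀ a b, |F a b| ≤ C)
    (hcut : ∀ S T, MeasurableSet S → MeasurableSet T →
      |∫ a in S, ∫ b in T, F a b ∂μ ∂μ| ≤ δ) :
    |∫ x, F (x e.inf) (x e.sup) * edgeProd A w x ∂Measure.pi fun _ => μ| ≤ δ := by
  classical
  have hsplit : ∀ x, edgeProd A w x =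
      edgeProd (A.filter (e.sup ∉ ·)) w x * edgeProd (A.filter (e.sup ∈ ·)) w x := fun x =>
    (Finset.prod_filter_not_mul_prod_filter A _ _).symm
  simp_rw [hsplit]
  refine abs_integral_mul_mul_le_of_cut (Sym2.inf_ne_sup he) hFm hFb hcut
    (measurable_edgeProd hwm) (measurable_edgeProd hwm) (edgeProd_mem_Icc hw01)
    (edgeProd_mem_Icc hw01) (edgeProd_update fun e' he' => (Finset.mem_filter.1 he').2)
    (edgeProd_update fun e' he' hinf => ?_)
  obtain ⟨he'A, hsup⟩ := Finset.mem_filter.1 he'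
  rw [(Sym2.mem_and_mem_iff (Sym2.inf_ne_sup he)).1 ⟨hinf, hsup⟩, e.mk_inf_sup] at he'A
  exact heA he'A

theorem abs_integral_edgeProd_sub_le_of_cut {E : Finset (Sym2 ι)} (hE : ∀ e ∈ E, ¬e.IsDiag)
    {f g : α → α → ℝ} (hfm : Measurable (uncurry f)) (hgm : Measurable (uncurry g))
    (hf01 : ∀ a b, f a b ∈ Icc (0 : ℝ) 1) (hg01 : ∀ a b, g a b ∈ Icc (0 : ℝ) 1) {δ : ℝ}
    (hcut : ∀ S T, MeasurableSet S → MeasurableSet T →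
      |∫ a in S, ∫ b in T, (f a b - g a b) ∂μ ∂μ| ≤ δ) :
    |∫ x, edgeProd E (fun _ => f) x ∂Measure.pi (fun _ => μ) -
      ∫ x, edgeProd E (fun _ => g) x ∂Measure.pi (fun _ => μ)| ≤ E.card * δ := by
  classical
  let w (A : Finset (Sym2 ι)) (e : Sym2 ι) : α → α → ℝ := if e ∈ A then f else g
  have hwm : ∀ A e, Measurable (uncurry (w A e)) := fun A e => by
    unfold w; split_ifs <;> assumption
  have hw01 : ∀ A e a b, w A e a b ∈ Icc (0 : ℝ) 1 := fun A e => by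
    unfold w; split_ifs <;> assumption
  have hint : ∀ A, Integrable (edgeProd E (w A)) (Measure.pi fun _ => μ) := fun A =>
    .of_bound (measurable_edgeProd (hwm A)).aestronglyMeasurable 1 (ae_of_all _ fun x => by
      rw [Real.norm_of_nonneg (edgeProd_mem_Icc (hw01 A) x).1]
      exact (edgeProd_mem_Icc (hw01 A) x).2)
  have hFb : ∀ a b, |f a b - g a b| ≤ 1 := fun a b =>
    abs_sub_le_iff.2
      ⟨by linarith [(hf01 a b).2, (hg01 a b).1], by linarith [(hf01 a b).1, (hg01 a b).2]⟩
  suffices key : ∀ A ⊆ E, |∫ x, edgeProd E (w A) x ∂Measure.pi (fun _ => μ) -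
      ∫ x, edgeProd E (w ∅) x ∂Measure.pi (fun _ => μ)| ≤ A.card * δ by
    have hwE : edgeProd E (w E) = edgeProd E (fun _ => f) :=
      edgeProd_congr fun e he => if_pos he
    have hw0 : w ∅ = fun _ => g := funext fun e => if_neg (Finset.notMem_empty e)
    simpa only [hwE, hw0] using key E subset_rfl
  intro A
  induction A using Finset.induction_on with
  | empty => simp
  | insert e A heA ih =>
    intro hA
    have heE : e ∈ E := hA (Finset.mem_insert_self e A)
    have hstep : ∀ x, edgeProd E (w (insert e A)) x - edgeProd E (w A) x =
        (f (x e.inf) (x e.sup) - g (x e.inf) (x e.sup)) * edgeProd (E.erase e) (w A) x :=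
      fun x => by
        have hoff : edgeProd (E.erase e) (w (insert e A)) = edgeProd (E.erase e) (w A) :=
          edgeProd_congr fun e' he' => by simp [w, Finset.ne_of_mem_erase he']
        rw [edgeProd, edgeProd, ← Finset.mul_prod_erase E _ heE, ← Finset.mul_prod_erase E _ heE,
          ← edgeProd, ← edgeProd, hoff,
          show w (insert e A) e = f from if_pos (Finset.mem_insert_self e A),
          show w A e = g from if_neg heA]
        ring
    have hedge : |∫ x, edgeProd E (w (insert e A)) x ∂Measure.pi (fun _ => μ) -
        ∫ x, edgeProd E (w A) x ∂Measure.pi (fun _ => μ)| ≤ δ := by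
      rw [← integral_sub (hint _) (hint _)]
      simp_rw [hstep]
      exact abs_integral_mul_edgeProd_le_of_cut (hE e heE) (E.notMem_erase e) (hwm A) (hw01 A)
        (F := fun a b => f a b - g a b) (hfm.sub hgm) hFb hcut
    rw [Finset.card_insert_of_notMem heA, Nat.cast_succ, add_mul, one_mul, add_comm]
    exact (abs_sub_le _ _ _).trans
      (add_le_add hedge (ih ((Finset.subset_insert e A).trans hA)))

end Counting

theorem counting_lemma_general
    {k : ℕ} (H : SimpleGraph (Fin k)) [DecidableRel H.Adj]
    (f g : ℝ → ℝ → ℝ)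
    (hf : Measurable (Function.uncurry f)) (hg : Measurable (Function.uncurry g))
    (hfr : ∀ x y, f x y ∈ Set.Icc (0:ℝ) 1) (hgr : ∀ x y, g x y ∈ Set.Icc (0:ℝ) 1)
    (δ : ℝ)
    (hδ : ∀ S T : Set ℝ, MeasurableSet S → MeasurableSet T →
      |∫ x in S ∩ Set.Icc (0:ℝ) 1, ∫ y in T ∩ Set.Icc (0:ℝ) 1, (f x y - g x y)| ≤ δ) :
    |homDensity H f - homDensity H g| ≤ (H.edgeFinset.card : ℝ) * δ := by
  have : IsProbabilityMeasure (volume.restrict (Icc (0 : ℝ) 1)) := ⟨by simp⟩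
  have hdensity : ∀ q, homDensity H q = ∫ x, edgeProd H.edgeFinset (fun _ => q) x
      ∂Measure.pi fun _ => volume.restrict (Icc (0 : ℝ) 1) := fun q => by
    rw [homDensity, volume_pi, Measure.restrict_pi_pi]
    rfl
  rw [hdensity, hdensity]
  refine abs_integral_edgeProd_sub_le_of_cut
    (fun e he => H.not_isDiag_of_mem_edgeSet (SimpleGraph.mem_edgeFinset.1 he)) hf hg hfr hgr
    fun S T hS hT => ?_
  rw [Measure.restrict_restrict hS, Measure.restrict_restrict hT]
  exact hδ S T hS hT

/-- Counting lemma: homomorphism densities are Lipschitz in the cut norm,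
`|t_H(f) - t_H(g)| ≤ |E(H)| · d_□(f,g)`.  We phrase it via an upper bound `δ` on the
cut norm, `sup_{S,T} |∫_{S×T} (f-g)| ≤ δ`. -/
theorem counting_lemma
    {k : ℕ} (H : SimpleGraph (Fin k)) [DecidableRel H.Adj]
    (f g : ℝ → ℝ → ℝ)
    (hf : Measurable (Function.uncurry f)) (hg : Measurable (Function.uncurry g))
    (hfr : ∀ x y, f x y ∈ Set.Icc (0:ℝ) 1) (hgr : ∀ x y, g x y ∈ Set.Icc (0:ℝ) 1)
    (hfs : ∀ x y, f x y = f y x) (hgs : ∀ x y, g x y = g y x)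
    (δ : ℝ)
    (hδ : ∀ S T : Set ℝ, MeasurableSet S → MeasurableSet T →
      |∫ x in S ∩ Set.Icc (0:ℝ) 1, ∫ y in T ∩ Set.Icc (0:ℝ) 1, (f x y - g x y)| ≤ δ) :
    |homDensity H f - homDensity H g| ≤ (H.edgeFinset.card : ℝ) * δ :=
  counting_lemma_general H f g hf hg hfr hgr δ hδ
end

section
/- If a sequence of permutons γ_n converges weakly to a permuton γ, then for every pattern τ ∈ S_k the pattern densities converge: ρ_τ(γ_n) → ρ_τ(γ). -/
/-!
Products of weakly convergent probability measures converge weakly, so by the portmanteau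
theorem it suffices that the frontier of the pattern event be `γ^{⊗k}`-null. Near a
configuration whose `x`-coordinates are pairwise distinct and whose `y`-coordinates are pairwise
distinct, every comparison between coordinates is locally constant, so such a configuration is
not on the frontier; and coincidences of coordinates are null since the marginals of a permuton
have no atoms.
-/

open MeasureTheory

/-- The density of the pattern `τ ∈ S_k` in a permuton `γ`: `k!` times the
`γ^{⊗k}`-probability that `k` independent samples, listed with increasing
`x`-coordinates, have `y`-coordinates in the relative order prescribed by `τ`. -/
noncomputable def patternDensity (k : ℕ) (τ : Equiv.Perm (Fin k))
    (γ : Measure (ℝ × ℝ)) : ENNReal :=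
  (Nat.factorial k : ENNReal) *
    Measure.pi (fun _ : Fin k => γ)
      {z : Fin k → ℝ × ℝ |
        (∀ i j : Fin k, i < j → (z i).1 < (z j).1) ∧
        (∀ i j : Fin k, i < j → ((z i).2 < (z j).2 ↔ τ i < τ j))}

open ProbabilityTheory Filter Topology Function

section NullDiagonals

variable {ι α : Type*} [Fintype ι] [MeasurableSpace α] [MeasurableEq α]

lemma ae_fst_ne_snd_prod (μ ν : Measure α) [SFinite ν] [NullSingletonClass ν] :
    ∀ᵐ p ∂μ.prod ν, p.1 ≠ p.2 :=
  (Measure.ae_prod_iff_ae_ae measurableSet_diagonal.compl).2 <|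
    ae_of_all _ fun x => (ν.ae_ne x).mono fun _ h => Ne.symm h

lemma ae_ne_pi (μ : ι → Measure α) [∀ i, IsProbabilityMeasure (μ i)]
    [∀ i, NullSingletonClass (μ i)] {i j : ι} (hij : i ≠ j) :
    ∀ᵐ a ∂Measure.pi μ, a i ≠ a j := by
  have hpair : (Measure.pi μ).map (fun a => (a i, a j)) = (μ i).prod (μ j) := by
    rw [(iIndepFun_pi (X := fun _ => id) fun _ => aemeasurable_id).indepFun hij
      |>.map_prod_eq_prod_map_map (measurable_pi_apply i).aemeasurable
        (measurable_pi_apply j).aemeasurable,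
      (measurePreserving_eval μ i).map_eq, (measurePreserving_eval μ j).map_eq]
  have h := ae_fst_ne_snd_prod (μ i) (μ j)
  rw [← hpair] at h
  exact ae_of_ae_map (f := fun a : ι → α => (a i, a j)) (by fun_prop) h

lemma ae_injective_pi (μ : ι → Measure α) [∀ i, IsProbabilityMeasure (μ i)]
    [∀ i, NullSingletonClass (μ i)] :
    ∀ᵐ a ∂Measure.pi μ, Injective a := by
  refine ae_all_iff.2 fun i => ae_all_iff.2 fun j => ?_
  by_cases hij : i = j
  · exact ae_of_all _ fun _ _ => hij
  · exact (ae_ne_pi μ hij).mono fun _ ha he => absurd he ha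

lemma ae_injective_comp_pi {β : Type*} [MeasurableSpace β] (μ : Measure β)
    [IsProbabilityMeasure μ] {f : β → α} (hf : Measurable f) [NullSingletonClass (μ.map f)] :
    ∀ᵐ z ∂Measure.pi (fun _ : ι => μ), Injective (fun i => f (z i)) := by
  have := Measure.isProbabilityMeasure_map (μ := μ) hf.aemeasurable
  have h := ae_injective_pi (fun _ : ι => μ.map f)
  rw [← Measure.pi_map_pi fun _ => hf.aemeasurable] at h
  have hmeas : Measurable fun (z : ι → β) i => f (z i) :=
    measurable_pi_lambda _ fun i => hf.comp (measurable_pi_apply i)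
  exact ae_of_ae_map hmeas.aemeasurable h

end NullDiagonals

lemma notMem_frontier_of_eventually_mem_iff {X : Type*} [TopologicalSpace X] {s : Set X} {x : X}
    (h : ∀ᶠ y in 𝓝 x, y ∈ s ↔ x ∈ s) : x ∉ frontier s := by
  by_cases hx : x ∈ s
  · exact (mem_interior_iff_notMem_frontier hx).1
      (mem_interior_iff_mem_nhds.2 (h.mono fun _ hy => hy.2 hx))
  · exact fun hfr => (mem_closure_iff_frequently.1 hfr.1).and_eventually h
      |>.exists.elim fun _ hy => hx (hy.2.1 hy.1)

lemma eventually_lt_iff_of_injective {ι α : Type*} [Finite ι] [LinearOrder α]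
    [TopologicalSpace α] [OrderClosedTopology α] {a : ι → α} (ha : Injective a) :
    ∀ᶠ b in 𝓝 a, ∀ i j, b i < b j ↔ a i < a j := by
  have hcoord (i : ι) : Tendsto (fun b : ι → α => b i) (𝓝 a) (𝓝 (a i)) :=
    (continuous_apply i).tendsto a
  refine eventually_all.2 fun i => eventually_all.2 fun j => ?_
  rcases lt_trichotomy (a i) (a j) with hlt | heq | hgt
  · exact ((hcoord i).eventually_lt (hcoord j) hlt).mono fun b hb => iff_of_true hb hlt
  · simp [ha heq]
  · exact ((hcoord j).eventually_lt (hcoord i) hgt).mono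
      fun b hb => iff_of_false hb.asymm hgt.asymm

def patternEvent {k : ℕ} (τ : Equiv.Perm (Fin k)) : Set (Fin k → ℝ × ℝ) :=
  {z | (∀ i j : Fin k, i < j → (z i).1 < (z j).1) ∧
    (∀ i j : Fin k, i < j → ((z i).2 < (z j).2 ↔ τ i < τ j))}

lemma patternDensity_eq (k : ℕ) (τ : Equiv.Perm (Fin k)) (γ : Measure (ℝ × ℝ)) :
    patternDensity k τ γ = k.factorial * Measure.pi (fun _ : Fin k => γ) (patternEvent τ) :=
  rfl

lemma frontier_patternEvent_subset {k : ℕ} (τ : Equiv.Perm (Fin k)) :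
    frontier (patternEvent τ) ⊆
      {z | ¬(Injective (fun i => (z i).1) ∧ Injective (fun i => (z i).2))} := by
  rintro z hz ⟨hx, hy⟩
  have hfst := (continuous_pi fun i => (continuous_apply i).fst).tendsto z
  have hsnd := (continuous_pi fun i => (continuous_apply i).snd).tendsto z
  refine notMem_frontier_of_eventually_mem_iff ?_ hz
  filter_upwards [hfst.eventually (eventually_lt_iff_of_injective hx),
    hsnd.eventually (eventually_lt_iff_of_injective hy)] with w hwx hwy
  simp only [patternEvent, Set.mem_ofPred_eq, hwx, hwy]

lemma measure_frontier_patternEvent {k : ℕ} (τ : Equiv.Perm (Fin k)) (γ : Measure (ℝ × ℝ))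
    [IsProbabilityMeasure γ] [NullSingletonClass (γ.map Prod.fst)]
    [NullSingletonClass (γ.map Prod.snd)] :
    Measure.pi (fun _ : Fin k => γ) (frontier (patternEvent τ)) = 0 :=
  measure_mono_null (frontier_patternEvent_subset τ) <| ae_iff.1 <|
    (ae_injective_comp_pi γ measurable_fst).and (ae_injective_comp_pi γ measurable_snd)

theorem patternDensity_continuous_weak_convergence_general
    (γseq : ℕ → Measure (ℝ × ℝ)) (γ : Measure (ℝ × ℝ))
    [∀ n, IsProbabilityMeasure (γseq n)] [IsProbabilityMeasure γ]
    (hf : γ.map Prod.fst = volume.restrict (Set.Icc (0:ℝ) 1))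
    (hs : γ.map Prod.snd = volume.restrict (Set.Icc (0:ℝ) 1))
    (hconv : ∀ f : BoundedContinuousFunction (ℝ × ℝ) ℝ,
      Filter.Tendsto (fun n => ∫ p, f p ∂(γseq n)) Filter.atTop
        (nhds (∫ p, f p ∂γ)))
    (k : ℕ) (τ : Equiv.Perm (Fin k)) :
    Filter.Tendsto (fun n => (patternDensity k τ (γseq n)).toReal) Filter.atTop
      (nhds ((patternDensity k τ γ).toReal)) := by
  let P : ℕ → ProbabilityMeasure (ℝ × ℝ) := fun n => ⟨γseq n, inferInstance⟩
  let P₀ : ProbabilityMeasure (ℝ × ℝ) := ⟨γ, inferInstance⟩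
  have hP : Tendsto P atTop (𝓝 P₀) :=
    ProbabilityMeasure.tendsto_iff_forall_integral_tendsto.2 hconv
  have hPpi : Tendsto (fun n => ProbabilityMeasure.pi fun _ : Fin k => P n) atTop
      (𝓝 (ProbabilityMeasure.pi fun _ => P₀)) :=
    (ProbabilityMeasure.continuous_pi.tendsto _).comp (tendsto_pi_nhds.2 fun _ => hP)
  have : NullSingletonClass (γ.map Prod.fst) := hf ▸ inferInstance
  have : NullSingletonClass (γ.map Prod.snd) := hs ▸ inferInstance
  have hE := ProbabilityMeasure.tendsto_measure_of_null_frontier_of_tendsto' hPpi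
    (measure_frontier_patternEvent τ γ)
  simp only [patternDensity_eq, ENNReal.toReal_mul]
  exact ((ENNReal.tendsto_toReal (measure_ne_top _ _)).comp hE).const_mul _

/-- If permutons `γ_n` converge weakly to a permuton `γ`, then for every pattern
`τ ∈ S_k` the pattern densities converge: `ρ_τ(γ_n) → ρ_τ(γ)`. -/
theorem patternDensity_continuous_weak_convergence
    (γseq : ℕ → Measure (ℝ × ℝ)) (γ : Measure (ℝ × ℝ))
    [∀ n, IsProbabilityMeasure (γseq n)] [IsProbabilityMeasure γ]
    (hfseq : ∀ n, (γseq n).map Prod.fst = volume.restrict (Set.Icc (0:ℝ) 1))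
    (hsseq : ∀ n, (γseq n).map Prod.snd = volume.restrict (Set.Icc (0:ℝ) 1))
    (hf : γ.map Prod.fst = volume.restrict (Set.Icc (0:ℝ) 1))
    (hs : γ.map Prod.snd = volume.restrict (Set.Icc (0:ℝ) 1))
    (hconv : ∀ f : BoundedContinuousFunction (ℝ × ℝ) ℝ,
      Filter.Tendsto (fun n => ∫ p, f p ∂(γseq n)) Filter.atTop
        (nhds (∫ p, f p ∂γ)))
    (k : ℕ) (τ : Equiv.Perm (Fin k)) :
    Filter.Tendsto (fun n => (patternDensity k τ (γseq n)).toReal) Filter.atTop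
      (nhds ((patternDensity k τ γ).toReal)) :=
  patternDensity_continuous_weak_convergence_general γseq γ hf hs hconv k τ
end
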